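/- Let ρ_J, ρ_K ∈ {ρ₁, ρ₂, ρ₃, ρ₁₂, ρ₂₃, ρ₁₂₃} be elements of the torus algebra 𝒜 with ρ_{JK} := ρ_J·ρ_K ≠ 0. Let M₁ be the type-D structure over 𝒜 with basis {a, b, c, d, e, f, g, h} and δ¹a = ρ_{JK} ⊗ e, δ¹b = 1 ⊗ a + 1 ⊗ c + ρ_J ⊗ f, δ¹c = ρ_J ⊗ g, δ¹d = 1 ⊗ c + ρ_J ⊗ h, δ¹e = 0, δ¹f = ρ_K ⊗ e + 1 ⊗ g, δ¹g = 0, δ¹h = 1 ⊗ g, and let M₁′ be the type-D structure with basis {y, x} and δ¹y = ρ_K ⊗ x, δ¹x = 0. Then M₁ and M₁′ are homotopy equivalent. -/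

import Mathlib

/-- The torus algebra: the 8-dimensional `F₂`-algebra with basis
`{ι₀, ι₁, ρ₁, ρ₂, ρ₃, ρ₁₂, ρ₂₃, ρ₁₂₃}`, encoded by its full multiplication table. -/
structure TorusAlg (A : Type) [Ring A] [Algebra (ZMod 2) A] where
  i0 : A
  i1 : A
  r1 : A
  r2 : A
  r3 : A
  r12 : A
  r23 : A
  r123 : A
  basis_indep : LinearIndependent (ZMod 2) ![i0, i1, r1, r2, r3, r12, r23, r123]
  basis_span : Submodule.span (ZMod 2)
      ({i0, i1, r1, r2, r3, r12, r23, r123} : Set A) = ⊤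
  sum_idem : i0 + i1 = 1
  i0_i0 : i0 * i0 = i0
  i1_i1 : i1 * i1 = i1
  i0_i1 : i0 * i1 = 0
  i1_i0 : i1 * i0 = 0
  i0_r1 : i0 * r1 = r1
  r1_i1 : r1 * i1 = r1
  i1_r2 : i1 * r2 = r2
  r2_i0 : r2 * i0 = r2
  i0_r3 : i0 * r3 = r3
  r3_i1 : r3 * i1 = r3
  i0_r12 : i0 * r12 = r12
  r12_i0 : r12 * i0 = r12
  i1_r23 : i1 * r23 = r23
  r23_i1 : r23 * i1 = r23
  i0_r123 : i0 * r123 = r123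
  r123_i1 : r123 * i1 = r123
  r1_r2 : r1 * r2 = r12
  r2_r3 : r2 * r3 = r23
  r1_r23 : r1 * r23 = r123
  r12_r3 : r12 * r3 = r123
  r1_r1 : r1 * r1 = 0
  r1_r3 : r1 * r3 = 0
  r1_r12 : r1 * r12 = 0
  r1_r123 : r1 * r123 = 0
  r2_r1 : r2 * r1 = 0
  r2_r2 : r2 * r2 = 0
  r2_r12 : r2 * r12 = 0
  r2_r23 : r2 * r23 = 0
  r2_r123 : r2 * r123 = 0
  r3_r1 : r3 * r1 = 0
  r3_r2 : r3 * r2 = 0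
  r3_r3 : r3 * r3 = 0
  r3_r12 : r3 * r12 = 0
  r3_r23 : r3 * r23 = 0
  r3_r123 : r3 * r123 = 0
  r12_r1 : r12 * r1 = 0
  r12_r2 : r12 * r2 = 0
  r12_r12 : r12 * r12 = 0
  r12_r23 : r12 * r23 = 0
  r12_r123 : r12 * r123 = 0
  r23_r1 : r23 * r1 = 0
  r23_r2 : r23 * r2 = 0
  r23_r3 : r23 * r3 = 0
  r23_r12 : r23 * r12 = 0
  r23_r23 : r23 * r23 = 0
  r23_r123 : r23 * r123 = 0
  r123_r1 : r123 * r1 = 0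
  r123_r2 : r123 * r2 = 0
  r123_r3 : r123 * r3 = 0
  r123_r12 : r123 * r12 = 0
  r123_r23 : r123 * r23 = 0
  r123_r123 : r123 * r123 = 0

variable {A : Type} [Ring A] [Algebra (ZMod 2) A]

/-- Composition of morphisms of type-D structures, in matrix form. -/
def matComp {ι κ σ : Type} [Fintype κ] (F : ι → κ → A) (G : κ → σ → A) :
    ι → σ → A :=
  fun i s => ∑ j, F i j * G j s

/-- The identity morphism, in matrix form. -/
def matId {ι : Type} [DecidableEq ι] : ι → ι → A :=
  fun i j => if i = j then 1 else 0

/-- The differential of a morphism of type-D structures, in matrix form: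
`∂F = F · d_N + d_M · F`. -/
def matDiff {ι κ : Type} [Fintype ι] [Fintype κ]
    (dM : ι → ι → A) (dN : κ → κ → A) (F : ι → κ → A) : ι → κ → A :=
  fun i k => (∑ j, F i j * dN j k) + (∑ j, dM i j * F j k)

/-- The type-D structure equation `(μ ⊗ id) ∘ (id ⊗ δ¹) ∘ δ¹ = 0`, in matrix form. -/
def IsTypeD {ι : Type} [Fintype ι] (d : ι → ι → A) : Prop :=
  ∀ i k, (∑ j, d i j * d j k) = 0

/-- A morphism is a chain map when its differential vanishes. -/
def IsChainMap {ι κ : Type} [Fintype ι] [Fintype κ]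
    (dM : ι → ι → A) (dN : κ → κ → A) (F : ι → κ → A) : Prop :=
  matDiff dM dN F = 0

/-- Homotopy equivalence of two type-D structures, in matrix form:
chain maps `F`, `G` with `G ∘ F + id = ∂H` and `F ∘ G + id = ∂H'`. -/
def HtpyEquiv {ι κ : Type} [Fintype ι] [Fintype κ] [DecidableEq ι] [DecidableEq κ]
    (dM : ι → ι → A) (dN : κ → κ → A) : Prop :=
  ∃ (F : ι → κ → A) (G : κ → ι → A) (H : ι → ι → A) (H' : κ → κ → A),
    IsChainMap dM dN F ∧ IsChainMap dN dM G ∧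
    matComp F G + matId = matDiff dM dM H ∧
    matComp G F + matId = matDiff dN dN H'

/-- Generators of the type-D structure `M₁`. -/
inductive GM6 | a | b | c | d | e | f | g | h
deriving DecidableEq

instance instFintypeGM6 : Fintype GM6 :=
  ⟨{.a, .b, .c, .d, .e, .f, .g, .h}, fun x => by cases x <;> first | decide | simp⟩

/-- Generators of the type-D structure `M₁′`. -/
inductive GN6 | y | x
deriving DecidableEq

instance instFintypeGN6 : Fintype GN6 :=
  ⟨{.y, .x}, fun x => by cases x <;> first | decide | simp⟩

/-- `δ¹a = ρ_{JK} ⊗ e`, `δ¹b = 1 ⊗ a + 1 ⊗ c + ρ_J ⊗ f`, `δ¹c = ρ_J ⊗ g`,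
`δ¹d = 1 ⊗ c + ρ_J ⊗ h`, `δ¹e = 0`, `δ¹f = ρ_K ⊗ e + 1 ⊗ g`, `δ¹g = 0`,
`δ¹h = 1 ⊗ g`. -/
def dM6 (ρJ ρK : A) : GM6 → GM6 → A
  | .a, .e => ρJ * ρK
  | .b, .a => 1
  | .b, .c => 1
  | .b, .f => ρJ
  | .c, .g => ρJ
  | .d, .c => 1
  | .d, .h => ρJ
  | .f, .e => ρK
  | .f, .g => 1
  | .h, .g => 1
  | _, _ => 0

/-- `δ¹y = ρ_K ⊗ x`, `δ¹x = 0`. -/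
def dN6 (ρK : A) : GN6 → GN6 → A
  | .y, .x => ρK
  | _, _ => 0

/-! The substitution `f ↦ f + h` exhibits `M₁′` inside `M₁`: `δ¹(f + h) = ρ_K ⊗ e` because the
two unit arrows `f → g` and `h → g` cancel in characteristic two. `G` is this inclusion
`y ↦ f + h`, `x ↦ e`, and `F` is a retraction onto it (`F ∘ G = id`). The homotopy `H`
contracting the complementary summand is built from the unit arrows `b → a`, `d → c` and
`f → g`. -/

theorem two_eq_zero_of_zmod_two : (2 : A) = 0 := by
  have h : (2 : ZMod 2) = 0 := rfl
  rw [← map_ofNat (algebraMap (ZMod 2) A) 2, h, map_zero]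

theorem add_self_eq_zero_of_zmod_two (x : A) : x + x = 0 := by
  rw [← two_mul, two_eq_zero_of_zmod_two, zero_mul]

theorem matDiff_zero {R ι κ : Type} [Ring R] [Fintype ι] [Fintype κ] (dM : ι → ι → R)
    (dN : κ → κ → R) :
    matDiff dM dN 0 = 0 := by
  funext i k
  simp [matDiff]

theorem htpyEquiv_of_retraction {ι κ : Type} [Fintype ι] [Fintype κ] [DecidableEq ι]
    [DecidableEq κ] {dM : ι → ι → A} {dN : κ → κ → A} {F : ι → κ → A} {G : κ → ι → A}
    (H : ι → ι → A) (hF : IsChainMap dM dN F) (hG : IsChainMap dN dM G)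
    (hFG : matComp F G + matId = matDiff dM dM H) (hGF : matComp G F = matId) :
    HtpyEquiv dM dN :=
  ⟨F, G, H, 0, hF, hG, hFG, by
    rw [hGF, matDiff_zero]
    funext i k
    exact add_self_eq_zero_of_zmod_two _⟩

theorem GM6.sum_eq {M : Type} [AddCommMonoid M] (f : GM6 → M) :
    ∑ j, f j = f .a + f .b + f .c + f .d + f .e + f .f + f .g + f .h := by
  rw [show (Finset.univ : Finset GM6) = {.a, .b, .c, .d, .e, .f, .g, .h} from rfl]
  simp [add_assoc]

theorem GN6.sum_eq {M : Type} [AddCommMonoid M] (f : GN6 → M) :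
    ∑ j, f j = f .y + f .x := by
  rw [show (Finset.univ : Finset GN6) = {.y, .x} from rfl]
  simp

def retractionM6 (ρJ ρK : A) : GM6 → GN6 → A
  | .a, .y => ρJ
  | .c, .y => ρJ
  | .h, .y => 1
  | .e, .x => 1
  | .g, .x => ρK
  | _, _ => 0

def inclusionM6 : GN6 → GM6 → A
  | .y, .h => 1
  | .y, .f => 1
  | .x, .e => 1
  | _, _ => 0

def homotopyM6 : GM6 → GM6 → A
  | .a, .b => 1
  | .a, .d => 1
  | .c, .d => 1
  | .g, .f => 1
  | _, _ => 0

theorem isTypeD_dN6 {R : Type} [Ring R] (ρK : R) : IsTypeD (dN6 ρK) := by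
  intro i k
  cases i <;> cases k <;> simp [dN6, GN6.sum_eq]

theorem matComp_inclusionM6_retractionM6 {R : Type} [Ring R] (ρJ ρK : R) :
    matComp inclusionM6 (retractionM6 ρJ ρK) = matId := by
  funext i k
  cases i <;> cases k <;> simp [matComp, matId, inclusionM6, retractionM6, GM6.sum_eq]

section

variable (ρJ ρK : A)

theorem isTypeD_dM6 : IsTypeD (dM6 ρJ ρK) := by
  intro i k
  cases i <;> cases k <;> simp [dM6, GM6.sum_eq, add_self_eq_zero_of_zmod_two]

theorem isChainMap_retractionM6 : IsChainMap (dM6 ρJ ρK) (dN6 ρK) (retractionM6 ρJ ρK) := by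
  funext i k
  cases i <;> cases k <;>
    simp [matDiff, dM6, dN6, retractionM6, GM6.sum_eq, GN6.sum_eq, add_self_eq_zero_of_zmod_two]

theorem isChainMap_inclusionM6 : IsChainMap (dN6 ρK) (dM6 ρJ ρK) inclusionM6 := by
  funext i k
  cases i <;> cases k <;>
    simp [matDiff, dM6, dN6, inclusionM6, GM6.sum_eq, GN6.sum_eq, add_self_eq_zero_of_zmod_two]

theorem matComp_retractionM6_inclusionM6_add_matId :
    matComp (retractionM6 ρJ ρK) inclusionM6 + matId =
      matDiff (dM6 ρJ ρK) (dM6 ρJ ρK) homotopyM6 := by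
  funext i k
  cases i <;> cases k <;>
    simp [matComp, matId, matDiff, dM6, retractionM6, inclusionM6, homotopyM6, GM6.sum_eq,
      GN6.sum_eq, add_self_eq_zero_of_zmod_two]

end

theorem statement6_general (A : Type) [Ring A] [Algebra (ZMod 2) A]
    (ρJ ρK : A) :
    IsTypeD (dM6 ρJ ρK) ∧ IsTypeD (dN6 ρK) ∧
      HtpyEquiv (dM6 ρJ ρK) (dN6 ρK) :=
  ⟨isTypeD_dM6 ρJ ρK, isTypeD_dN6 ρK,
    htpyEquiv_of_retraction homotopyM6 (isChainMap_retractionM6 ρJ ρK)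
      (isChainMap_inclusionM6 ρJ ρK) (matComp_retractionM6_inclusionM6_add_matId ρJ ρK)
      (matComp_inclusionM6_retractionM6 ρJ ρK)⟩

theorem statement6 (A : Type) [Ring A] [Algebra (ZMod 2) A] (T : TorusAlg A)
    (ρJ ρK : A)
    (hJ : ρJ ∈ ({T.r1, T.r2, T.r3, T.r12, T.r23, T.r123} : Set A))
    (hK : ρK ∈ ({T.r1, T.r2, T.r3, T.r12, T.r23, T.r123} : Set A))
    (hJK : ρJ * ρK ≠ 0) :
    IsTypeD (dM6 ρJ ρK) ∧ IsTypeD (dN6 ρK) ∧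
      HtpyEquiv (dM6 ρJ ρK) (dN6 ρK) :=
  statement6_general A ρJ ρK
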